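/- Let λ : ℝ → ℝ be the inverse Mills ratio λ(z) = φ(z)/(1 − Φ(z)), where φ(z) = exp(−z²/2)/√(2π) is the standard normal density and Φ is the standard normal cumulative distribution function. Then λ is differentiable on ℝ and for every z ∈ ℝ its derivative satisfies 0 < λ'(z) < 1. -/

import Mathlib

/-!
Since `λ' = λ (λ - z)`, the claim `0 < λ' < 1` amounts to `z < λ(z) < r(z)`, where
`r(z) = (z + √(z² + 4)) / 2` is the positive root of `r (r - z) = 1`.
The lower bound holds because `(1 - Φ(z)) (λ(z) - z) = ∫_z^∞ (t - z) φ(t) dt > 0`,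
using `φ' = -t φ`. The upper bound is Birnbaum's inequality `1 - Φ(z) > φ(z) b(z)` with
`b(z) = (√(z² + 4) - z) / 2 = 1 / r(z)`: the difference of the two sides is strictly decreasing
and tends to `0` at `+∞`.
-/

open Real MeasureTheory

/-- Standard normal density `φ(z) = exp(−z²/2)/√(2π)`. -/
noncomputable def stdNormalPdf (z : ℝ) : ℝ :=
  Real.exp (-z ^ 2 / 2) / Real.sqrt (2 * Real.pi)

/-- Standard normal cumulative distribution function `Φ`. -/
noncomputable def stdNormalCdf (z : ℝ) : ℝ :=
  ∫ t in Set.Iic z, stdNormalPdf t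

/-- Inverse Mills ratio `λ(z) = φ(z)/(1 − Φ(z))`. -/
noncomputable def mills (z : ℝ) : ℝ :=
  stdNormalPdf z / (1 - stdNormalCdf z)

open Set Filter Topology

lemma setIntegral_Ioi_pos {f : ℝ → ℝ} {a : ℝ} (hf : IntegrableOn f (Ioi a))
    (hpos : ∀ t ∈ Ioi a, 0 < f t) : 0 < ∫ t in Ioi a, f t := by
  rw [setIntegral_pos_iff_support_of_nonneg_ae
    (ae_restrict_of_forall_mem measurableSet_Ioi fun t ht => (hpos t ht).le) hf]
  calc (0 : ENNReal) < volume (Ioi a) := by simp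
    _ ≤ volume (Function.support f ∩ Ioi a) :=
      measure_mono fun t ht => ⟨(hpos t ht).ne', ht⟩

section StdNormal

lemma stdNormalPdf_eq_gaussianPDFReal : stdNormalPdf = ProbabilityTheory.gaussianPDFReal 0 1 := by
  funext z
  simp [stdNormalPdf, ProbabilityTheory.gaussianPDFReal, div_eq_inv_mul]

lemma stdNormalPdf_pos (z : ℝ) : 0 < stdNormalPdf z := by
  unfold stdNormalPdf
  positivity

lemma continuous_stdNormalPdf : Continuous stdNormalPdf := by
  unfold stdNormalPdf
  fun_prop

lemma integrable_stdNormalPdf : Integrable stdNormalPdf := by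
  rw [stdNormalPdf_eq_gaussianPDFReal]
  exact ProbabilityTheory.integrable_gaussianPDFReal 0 1

lemma integral_stdNormalPdf : ∫ t, stdNormalPdf t = 1 := by
  rw [stdNormalPdf_eq_gaussianPDFReal]
  exact ProbabilityTheory.integral_gaussianPDFReal_eq_one 0 one_ne_zero

lemma integrable_id_mul_stdNormalPdf : Integrable fun t : ℝ => t * stdNormalPdf t := by
  refine ((integrable_mul_exp_neg_mul_sq (by norm_num : (0 : ℝ) < 1 / 2)).div_const
    √(2 * π)).congr (Eventually.of_forall fun t => ?_)
  simp only [stdNormalPdf]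
  ring_nf

lemma hasDerivAt_stdNormalPdf (z : ℝ) : HasDerivAt stdNormalPdf (-z * stdNormalPdf z) z := by
  have h : HasDerivAt (fun z : ℝ => -z ^ 2 / 2) (-z) z := by
    simpa using ((hasDerivAt_pow 2 z).neg.div_const 2).congr_deriv (by ring : _ = -z)
  refine (h.exp.div_const √(2 * π)).congr_deriv ?_
  simp only [stdNormalPdf]
  ring

lemma tendsto_stdNormalPdf_atTop : Tendsto stdNormalPdf atTop (𝓝 0) := by
  have h : Tendsto (fun z : ℝ => -z ^ 2 / 2) atTop atBot :=
    (tendsto_neg_atTop_atBot.comp (tendsto_pow_atTop two_ne_zero)).atBot_div_const two_pos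
  rw [← zero_div √(2 * π)]
  exact (tendsto_exp_atBot.comp h).div_const _

lemma integral_Ioi_id_mul_stdNormalPdf (z : ℝ) :
    ∫ t in Ioi z, t * stdNormalPdf t = stdNormalPdf z := by
  have h := integral_Ioi_of_hasDerivAt_of_tendsto' (a := z) (f := fun t => -stdNormalPdf t)
    (fun t _ => (hasDerivAt_stdNormalPdf t).neg.congr_deriv (by ring))
    integrable_id_mul_stdNormalPdf.integrableOn
    (by simpa using tendsto_stdNormalPdf_atTop.neg)
  simpa using h

lemma one_sub_stdNormalCdf_eq (z : ℝ) : 1 - stdNormalCdf z = ∫ t in Ioi z, stdNormalPdf t := by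
  have h := intervalIntegral.integral_Iic_add_Ioi (b := z)
    integrable_stdNormalPdf.integrableOn integrable_stdNormalPdf.integrableOn
  rw [integral_stdNormalPdf] at h
  rw [stdNormalCdf]
  linarith

lemma one_sub_stdNormalCdf_pos (z : ℝ) : 0 < 1 - stdNormalCdf z := by
  rw [one_sub_stdNormalCdf_eq]
  exact setIntegral_Ioi_pos integrable_stdNormalPdf.integrableOn fun t _ => stdNormalPdf_pos t

lemma hasDerivAt_stdNormalCdf (z : ℝ) : HasDerivAt stdNormalCdf (stdNormalPdf z) z := by
  have h : stdNormalCdf = fun u => (∫ t in (0 : ℝ)..u, stdNormalPdf t) + stdNormalCdf 0 := by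
    funext u
    have := intervalIntegral.integral_Iic_sub_Iic (a := 0) (b := u) (μ := volume)
      integrable_stdNormalPdf.integrableOn integrable_stdNormalPdf.integrableOn
    rw [stdNormalCdf, stdNormalCdf]
    linarith
  rw [h]
  exact (intervalIntegral.integral_hasDerivAt_right integrable_stdNormalPdf.intervalIntegrable
    continuous_stdNormalPdf.stronglyMeasurable.stronglyMeasurableAtFilter
    continuous_stdNormalPdf.continuousAt).add_const _

lemma mul_one_sub_stdNormalCdf_lt (z : ℝ) : z * (1 - stdNormalCdf z) < stdNormalPdf z := by
  have hint : IntegrableOn (fun t => t * stdNormalPdf t - z * stdNormalPdf t) (Ioi z) :=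
    (integrable_id_mul_stdNormalPdf.sub (integrable_stdNormalPdf.const_mul z)).integrableOn
  have hpos := setIntegral_Ioi_pos hint fun t ht =>
    by nlinarith [stdNormalPdf_pos t, mem_Ioi.mp ht]
  rw [integral_sub integrable_id_mul_stdNormalPdf.integrableOn
    (integrable_stdNormalPdf.const_mul z).integrableOn, integral_const_mul,
    integral_Ioi_id_mul_stdNormalPdf, ← one_sub_stdNormalCdf_eq] at hpos
  linarith

lemma tendsto_one_sub_stdNormalCdf_atTop :
    Tendsto (fun z => 1 - stdNormalCdf z) atTop (𝓝 0) := by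
  refine squeeze_zero' (Eventually.of_forall fun z => (one_sub_stdNormalCdf_pos z).le) ?_
    tendsto_stdNormalPdf_atTop
  filter_upwards [eventually_ge_atTop 1] with z hz
  nlinarith [mul_one_sub_stdNormalCdf_lt z, one_sub_stdNormalCdf_pos z]

end StdNormal

section Birnbaum

noncomputable def birnbaum (z : ℝ) : ℝ := (√(z ^ 2 + 4) - z) / 2

lemma lt_sqrt_sq_add_four (z : ℝ) : z < √(z ^ 2 + 4) :=
  lt_of_pow_lt_pow_left₀ 2 (sqrt_nonneg _) (by rw [sq_sqrt (by positivity)]; linarith)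

lemma mul_sqrt_sq_add_four_lt (z : ℝ) : z * √(z ^ 2 + 4) < z ^ 2 + 2 :=
  lt_of_pow_lt_pow_left₀ 2 (by positivity) (by rw [mul_pow, sq_sqrt (by positivity)]; nlinarith)

lemma birnbaum_pos (z : ℝ) : 0 < birnbaum z := by
  have := lt_sqrt_sq_add_four z
  unfold birnbaum
  linarith

lemma birnbaum_mul_add_self (z : ℝ) : birnbaum z * (birnbaum z + z) = 1 := by
  unfold birnbaum
  linear_combination (1 / 4 : ℝ) * sq_sqrt (by positivity : (0 : ℝ) ≤ z ^ 2 + 4)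

lemma one_lt_birnbaum_mul_sqrt (z : ℝ) : 1 < birnbaum z * √(z ^ 2 + 4) := by
  have h := mul_sqrt_sq_add_four_lt z
  have hs := sq_sqrt (by positivity : (0 : ℝ) ≤ z ^ 2 + 4)
  unfold birnbaum
  nlinarith

lemma hasDerivAt_birnbaum (z : ℝ) :
    HasDerivAt birnbaum (-birnbaum z / √(z ^ 2 + 4)) z := by
  have hs : √(z ^ 2 + 4) ≠ 0 := (sqrt_pos.mpr (by positivity)).ne'
  have h : HasDerivAt (fun z : ℝ => z ^ 2 + 4) (2 * z) z := by
    simpa using (hasDerivAt_pow 2 z).add_const 4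
  refine (((h.sqrt (by positivity)).sub (hasDerivAt_id z)).div_const 2).congr_deriv ?_
  unfold birnbaum
  field_simp
  ring

noncomputable def birnbaumGap (z : ℝ) : ℝ := 1 - stdNormalCdf z - stdNormalPdf z * birnbaum z

lemma hasDerivAt_birnbaumGap (z : ℝ) :
    HasDerivAt birnbaumGap
      (stdNormalPdf z * (z * birnbaum z + birnbaum z / √(z ^ 2 + 4) - 1)) z := by
  refine (((hasDerivAt_const z 1).sub (hasDerivAt_stdNormalCdf z)).sub
    ((hasDerivAt_stdNormalPdf z).mul (hasDerivAt_birnbaum z))).congr_deriv ?_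
  ring

lemma strictAnti_birnbaumGap : StrictAnti birnbaumGap := by
  refine strictAnti_of_deriv_neg fun z => ?_
  rw [(hasDerivAt_birnbaumGap z).deriv]
  set s := √(z ^ 2 + 4)
  have hs : 0 < s := sqrt_pos.mpr (by positivity)
  have hb := birnbaum_pos z
  have h : z * birnbaum z + birnbaum z / s - 1 = birnbaum z / s * (1 - birnbaum z * s) := by
    field_simp
    linear_combination s * birnbaum_mul_add_self z
  rw [h]
  exact mul_neg_of_pos_of_neg (stdNormalPdf_pos z) (mul_neg_of_pos_of_neg (by positivity)
    (by linarith [one_lt_birnbaum_mul_sqrt z]))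

lemma tendsto_birnbaumGap_atTop : Tendsto birnbaumGap atTop (𝓝 0) := by
  have h : Tendsto (fun z => stdNormalPdf z * birnbaum z) atTop (𝓝 0) := by
    refine squeeze_zero' (Eventually.of_forall fun z =>
      (mul_pos (stdNormalPdf_pos z) (birnbaum_pos z)).le) ?_ tendsto_stdNormalPdf_atTop
    filter_upwards [eventually_ge_atTop 0] with z hz
    have hb1 : birnbaum z ≤ 1 := by nlinarith [birnbaum_mul_add_self z, birnbaum_pos z]
    exact mul_le_of_le_one_right (stdNormalPdf_pos z).le hb1
  rw [← sub_zero 0]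
  exact tendsto_one_sub_stdNormalCdf_atTop.sub h

lemma stdNormalPdf_mul_birnbaum_lt (z : ℝ) :
    stdNormalPdf z * birnbaum z < 1 - stdNormalCdf z := by
  have h := (strictAnti_birnbaumGap (lt_add_one z)).trans_le'
    (strictAnti_birnbaumGap.antitone.le_of_tendsto tendsto_birnbaumGap_atTop (z + 1))
  unfold birnbaumGap at h
  linarith

end Birnbaum

section Mills

lemma mills_pos (z : ℝ) : 0 < mills z :=
  div_pos (stdNormalPdf_pos z) (one_sub_stdNormalCdf_pos z)

lemma lt_mills (z : ℝ) : z < mills z :=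
  (lt_div_iff₀ (one_sub_stdNormalCdf_pos z)).mpr (mul_one_sub_stdNormalCdf_lt z)

lemma mills_mul_birnbaum_lt_one (z : ℝ) : mills z * birnbaum z < 1 := by
  rw [mills, div_mul_eq_mul_div, div_lt_one (one_sub_stdNormalCdf_pos z)]
  exact stdNormalPdf_mul_birnbaum_lt z

lemma hasDerivAt_mills (z : ℝ) : HasDerivAt mills (mills z * (mills z - z)) z := by
  have hD := (one_sub_stdNormalCdf_pos z).ne'
  refine ((hasDerivAt_stdNormalPdf z).div
    ((hasDerivAt_const z 1).sub (hasDerivAt_stdNormalCdf z)) hD).congr_deriv ?_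
  simp only [mills, Pi.sub_apply]
  field_simp
  ring

lemma mills_mul_mills_sub_lt_one (z : ℝ) : mills z * (mills z - z) < 1 := by
  have hb := birnbaum_pos z
  have hgap : mills z - z < birnbaum z := by
    nlinarith [mills_mul_birnbaum_lt_one z, birnbaum_mul_add_self z]
  calc mills z * (mills z - z) < mills z * birnbaum z := by gcongr; exact mills_pos z
    _ < 1 := mills_mul_birnbaum_lt_one z

end Mills

/-- **Mills ratio derivative bound.** The inverse Mills ratio is differentiable
on `ℝ` and its derivative satisfies `0 < λ'(z) < 1` for every `z`. -/
theorem mills_differentiable_and_deriv_mem_Ioo :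
    Differentiable ℝ mills ∧ ∀ z : ℝ, 0 < deriv mills z ∧ deriv mills z < 1 := by
  refine ⟨fun z => (hasDerivAt_mills z).differentiableAt, fun z => ?_⟩
  rw [(hasDerivAt_mills z).deriv]
  exact ⟨mul_pos (mills_pos z) (sub_pos.mpr (lt_mills z)), mills_mul_mills_sub_lt_one z⟩
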